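/- arXiv:1710.10875 — 2 statements merged into one kernel-verified Lean document; each statement's English description precedes it below -/
import Mathlib

section
/- For every fixed positive integer a, one has ∑_{n ≤ x} (B_a(n) − β_a(n)) = x log log x + O(x) as x → ∞; in other words, the average order of B_a(n) − β_a(n) is log log n. -/
open Filter Asymptotics Real

/-- `B n` is the sum of the prime divisors of `n` counted with multiplicity
(so `B 1 = 0`). -/
def B (n : ℕ) : ℕ := (Nat.primeFactorsList n).sum

/-- `beta n` is the sum of the distinct prime divisors of `n` (so `beta 1 = 0`). -/
def beta (n : ℕ) : ℕ := ∑ p ∈ n.primeFactors, p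

/-- `Ba a n = n + a` if `n` is prime, and `B n` otherwise. -/
def Ba (a n : ℕ) : ℕ := if n.Prime then n + a else B n

/-- `betaa a n = n + a` if `n` is prime, and `beta n` otherwise. -/
def betaa (a n : ℕ) : ℕ := if n.Prime then n + a else beta n

/-
Since `B` is completely additive, `∑_{n ≤ N} B n = B (N!) = ∑_{p ≤ N} v_p(N!) p`, while
`∑_{n ≤ N} β n = ∑_{p ≤ N} ⌊N/p⌋ p`. Legendre's `v_p(N!) = ⌊N/p⌋ + v_p(⌊N/p⌋!)` turns the
difference into `∑_{p ≤ √N} v_p(⌊N/p⌋!) p`, and `v_p(m!) = m/p + O(1 + m/p²)` makes this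
`N ∑_{p ≤ √N} 1/p + O(N)`. Mertens' second theorem `∑_{p ≤ y} 1/p = log log y + O(1)` then gives
`N log log √N + O(N) = x log log x + O(x)`.

Mertens' first theorem `∑_{p ≤ N} log p / p = log N + O(1)` comes from comparing
`log N! = ∑_p v_p(N!) log p` with `N log N + O(N)`, using `θ(N) ≤ N log 4`; the second follows
from the first by Abel summation against `1 / log m`.
-/

open Finset
open scoped Nat

lemma Nat.primeFactors_factorial (N : ℕ) : (N !).primeFactors = N.primesLE := by
  ext p
  simp only [Nat.mem_primeFactors, Nat.mem_primesLE, ne_eq, Nat.factorial_ne_zero,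
    not_false_eq_true, and_true]
  exact ⟨fun ⟨hp, hd⟩ => ⟨(hp.dvd_factorial).1 hd, hp⟩, fun ⟨hN, hp⟩ => ⟨hp, hp.dvd_factorial.2 hN⟩⟩

lemma Nat.factorization_factorial_eq_div_add {p : ℕ} (hp : p.Prime) (m : ℕ) :
    (m !).factorization p = m / p + (m / p)!.factorization p := by
  have := Fact.mk hp
  rw [Nat.factorization_def _ hp, Nat.factorization_def _ hp, ← padicValNat_mul_div_factorial,
    padicValNat_factorial_mul, add_comm]

lemma Nat.factorization_factorial_div_eq_zero_of_lt_sq {N p : ℕ} (h : N < p ^ 2) :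
    (N / p)!.factorization p = 0 :=
  Nat.factorization_factorial_eq_zero_of_lt (Nat.div_lt_of_lt_mul (by rwa [← sq]))

lemma Nat.cast_div_sub_one_le (m n : ℕ) : (m : ℝ) / n - 1 ≤ (m / n : ℕ) := by
  rw [← Nat.floor_div_eq_div (K := ℝ)]
  exact (Nat.sub_one_lt_floor _).le

lemma abs_factorization_factorial_sub_div_le {p : ℕ} (hp : p.Prime) (m : ℕ) :
    |((m !).factorization p : ℝ) - m / p| ≤ 1 + 2 * m / p ^ 2 := by
  have hp2 : (2 : ℝ) ≤ p := by exact_mod_cast hp.two_le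
  have lower : (m : ℝ) / p - 1 ≤ (m !).factorization p := by
    refine (Nat.cast_div_sub_one_le m p).trans (Nat.cast_le.2 ?_)
    rw [Nat.factorization_factorial_eq_div_add hp m]
    exact Nat.le_add_right _ _
  have upper : ((m !).factorization p : ℝ) ≤ m / (p - 1) := by
    have h := Nat.factorization_factorial_le_div_pred hp m
    calc ((m !).factorization p : ℝ) ≤ ((m / (p - 1) : ℕ) : ℝ) := by exact_mod_cast h
      _ ≤ m / (p - 1) := by rw [← Nat.cast_pred hp.pos]; exact Nat.cast_div_le
  have pred : (m : ℝ) / (p - 1) ≤ m / p + 2 * m / p ^ 2 := by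
    have hm : (0 : ℝ) ≤ m := m.cast_nonneg
    rw [div_add_div _ _ (by positivity) (by positivity),
      div_le_div_iff₀ (by linarith) (by positivity)]
    nlinarith [mul_nonneg (mul_nonneg hm (by linarith : (0:ℝ) ≤ p)) (by linarith : (0:ℝ) ≤ p - 2)]
  rw [abs_le]
  constructor <;> nlinarith [show (0 : ℝ) ≤ 2 * m / p ^ 2 by positivity]

lemma abs_log_factorial_sub_mul_log_le (N : ℕ) : |log (N ! : ℝ) - N * log N| ≤ N := by
  rcases N.eq_zero_or_pos with rfl | hN
  · simp
  have upper : log (N ! : ℝ) ≤ N * log N := by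
    rw [← log_pow]
    exact log_le_log (by positivity) (by exact_mod_cast Nat.factorial_le_pow N)
  have lower := Stirling.le_log_factorial_stirling hN.ne'
  have : 0 ≤ log N / 2 + log (2 * π) / 2 := by
    have := log_nonneg (by linarith [pi_gt_three] : (1 : ℝ) ≤ 2 * π)
    have := Real.log_natCast_nonneg N
    positivity
  rw [abs_le]
  constructor <;> linarith

lemma summable_log_div_sq : Summable fun n : ℕ => log n / (n : ℝ) ^ 2 := by
  refine ((summable_nat_rpow_inv.2 (by norm_num : (1 : ℝ) < 3 / 2)).mul_left 2).of_nonneg_of_le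
    (fun n => div_nonneg (Real.log_natCast_nonneg n) (by positivity)) fun n => ?_
  rcases n.eq_zero_or_pos with rfl | hn
  · simp
  have hx : (0 : ℝ) < n := by exact_mod_cast hn
  have hsq : (n : ℝ) ^ 2 = (n : ℝ) ^ (1 / 2 : ℝ) * (n : ℝ) ^ (3 / 2 : ℝ) := by
    rw [← rpow_add hx, ← rpow_natCast]; norm_num
  calc log n / (n : ℝ) ^ 2 ≤ (n : ℝ) ^ (1 / 2 : ℝ) / (1 / 2) / (n : ℝ) ^ 2 :=
        div_le_div_of_nonneg_right (log_le_rpow_div hx.le (by norm_num)) (by positivity)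
    _ = 2 * ((n : ℝ) ^ (3 / 2 : ℝ))⁻¹ := by
        rw [hsq]; field_simp

lemma abs_log_sub_log_sub_div_le {x y : ℝ} (hx : 0 < x) (hxy : x ≤ y) :
    |log y - log x - (y - x) / y| ≤ (y - x) ^ 2 / (x * y) := by
  have hy : 0 < y := hx.trans_le hxy
  have lower : (y - x) / y ≤ log y - log x := by
    have := one_sub_inv_le_log_of_pos (div_pos hy hx)
    rwa [log_div hy.ne' hx.ne', inv_div, one_sub_div hy.ne'] at this
  have upper : log y - log x ≤ (y - x) / x := by
    have := log_le_sub_one_of_pos (div_pos hy hx)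
    rwa [log_div hy.ne' hx.ne', div_sub_one hx.ne'] at this
  have : (y - x) / x - (y - x) / y = (y - x) ^ 2 / (x * y) := by field_simp
  rw [abs_of_nonneg (by linarith)]
  linarith

lemma log_log_le_log_log_add_log {a b : ℝ} {k : ℕ} (ha : 1 < a) (hab : a ≤ b) (hb : b ≤ a ^ k) :
    log (log b) ≤ log (log a) + log k := by
  have hloga : 0 < log a := log_pos ha
  have hk : (0 : ℝ) < k := by
    rcases k.eq_zero_or_pos with rfl | hk
    · linarith [pow_zero a]
    · exact_mod_cast hk
  calc log (log b) ≤ log (k * log a) := by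
        refine log_le_log (log_pos (ha.trans_le hab)) ?_
        rw [← log_pow]
        exact log_le_log (by linarith) hb
    _ = log (log a) + log k := by rw [log_mul hk.ne' hloga.ne', add_comm]

lemma abs_sum_mul_sub_le {f r : ℕ → ℝ} {C : ℝ} {a b : ℕ} (hab : a ≤ b)
    (hf : ∀ m ∈ Ico a b, f (m + 1) ≤ f m) (hr : ∀ m ∈ Ico a b, |r m| ≤ C) :
    |∑ m ∈ Ico a b, r m * (f m - f (m + 1))| ≤ C * (f a - f b) := by
  calc _ ≤ ∑ m ∈ Ico a b, C * (f m - f (m + 1)) := by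
        refine (abs_sum_le_sum_abs _ _).trans (sum_le_sum fun m hm => ?_)
        rw [abs_mul, abs_of_nonneg (sub_nonneg.2 (hf m hm))]
        exact mul_le_mul_of_nonneg_right (hr m hm) (sub_nonneg.2 (hf m hm))
    _ = C * (f a - f b) := by
        rw [← mul_sum, ← neg_sub (f b), ← sum_Ico_sub f hab, ← sum_neg_distrib]
        simp only [neg_sub]

lemma abs_log_factorial_sub_mul_sum_log_div_le (N : ℕ) :
    |log (N ! : ℝ) - N * ∑ p ∈ N.primesLE, log p / p| ≤
      N * (log 4 + 2 * ∑' n : ℕ, log n / (n : ℝ) ^ 2) := by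
  have hlog : log (N ! : ℝ) = ∑ p ∈ N.primesLE, (N !).factorization p * log p := by
    rw [log_nat_eq_sum_factorization, Finsupp.sum, Nat.support_factorization,
      Nat.primeFactors_factorial]
  have hprime : ∀ p ∈ N.primesLE, |(N !).factorization p * log p - N * (log p / p)|
      ≤ log p + 2 * N * (log p / p ^ 2) := fun p hp => by
    have hlogp := Real.log_natCast_nonneg p
    rw [show (N !).factorization p * log p - N * (log p / p) =
      ((N !).factorization p - N / p) * log p by ring, abs_mul, abs_of_nonneg hlogp]
    calc _ ≤ (1 + 2 * N / p ^ 2) * log p := mul_le_mul_of_nonneg_right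
          (abs_factorization_factorial_sub_div_le (Nat.mem_primesLE.1 hp).2 N) hlogp
      _ = _ := by ring
  have htail : ∑ p ∈ N.primesLE, log p / (p : ℝ) ^ 2 ≤ ∑' n : ℕ, log n / (n : ℝ) ^ 2 :=
    summable_log_div_sq.sum_le_tsum _
      fun n _ => div_nonneg (Real.log_natCast_nonneg n) (by positivity)
  rw [hlog, mul_sum, ← sum_sub_distrib]
  calc _ ≤ ∑ p ∈ N.primesLE, (log p + 2 * N * (log p / p ^ 2)) :=
        (abs_sum_le_sum_abs _ _).trans (sum_le_sum hprime)
    _ = Chebyshev.theta N + 2 * N * ∑ p ∈ N.primesLE, log p / (p : ℝ) ^ 2 := by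
        rw [sum_add_distrib, Chebyshev.theta_eq_sum_primesLE_log, mul_sum]
    _ ≤ log 4 * N + 2 * N * ∑' n : ℕ, log n / (n : ℝ) ^ 2 := by
        gcongr
        exact Chebyshev.theta_le_log4_mul_x N.cast_nonneg
    _ = _ := by ring

theorem exists_abs_sum_log_div_sub_log_le :
    ∃ C, ∀ N : ℕ, |∑ p ∈ N.primesLE, log p / p - log N| ≤ C := by
  set c := ∑' n : ℕ, log n / (n : ℝ) ^ 2
  have hc : 0 ≤ c := tsum_nonneg fun n => div_nonneg (Real.log_natCast_nonneg n) (by positivity)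
  refine ⟨1 + log 4 + 2 * c, fun N => ?_⟩
  rcases N.eq_zero_or_pos with rfl | hN
  · simp only [Nat.primesLE_zero, sum_empty, CharP.cast_eq_zero, log_zero, sub_zero, abs_zero]
    positivity
  have hNpos : (0 : ℝ) < N := by exact_mod_cast hN
  refine le_of_mul_le_mul_left ?_ hNpos
  rw [← abs_of_pos hNpos, ← abs_mul, abs_of_pos hNpos]
  calc |N * (∑ p ∈ N.primesLE, log p / p - log N)|
      = |(log (N ! : ℝ) - N * log N) - (log (N ! : ℝ) - N * ∑ p ∈ N.primesLE, log p / p)| := by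
        ring_nf
    _ ≤ N + N * (log 4 + 2 * c) := (abs_sub _ _).trans <| add_le_add
        (abs_log_factorial_sub_mul_log_le N) (abs_log_factorial_sub_mul_sum_log_div_le N)
    _ = N * (1 + log 4 + 2 * c) := by ring

lemma sum_primesLE_one_div_eq {M : ℕ} (hM : 2 ≤ M) :
    ∑ p ∈ M.primesLE, (1 / p : ℝ) = (∑ p ∈ M.primesLE, log p / p) / log M +
      ∑ m ∈ Ico 2 M, (∑ p ∈ m.primesLE, log p / p) * (1 / log m - 1 / log (m + 1 : ℕ)) := by
  set g : ℕ → ℝ := fun i => if i.Prime then log i / i else 0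
  have hg : ∀ k, ∑ i ∈ range (k + 1), g i = ∑ p ∈ k.primesLE, log p / p := fun k => by
    rw [Nat.primesLE_eq_filter_range, sum_filter]
  have lhs : ∑ p ∈ M.primesLE, (1 / p : ℝ) = ∑ i ∈ Ico 2 (M + 1), (1 / log i) • g i := by
    have hP : M.primesLE = {i ∈ Ico 2 (M + 1) | i.Prime} := by
      ext i
      simp only [Nat.mem_primesLE, mem_filter, mem_Ico]
      exact ⟨fun ⟨hiM, hi⟩ => ⟨⟨hi.two_le, by omega⟩, hi⟩, fun ⟨⟨_, hiM⟩, hi⟩ => ⟨by omega, hi⟩⟩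
    rw [hP, sum_filter]
    refine sum_congr rfl fun i _ => ?_
    simp only [g, smul_eq_mul, mul_ite, mul_zero]
    split_ifs with hi
    · have := (log_pos (by exact_mod_cast hi.one_lt : (1 : ℝ) < i)).ne'
      field_simp
    · rfl
  rw [lhs, sum_Ico_by_parts _ _ (by omega : 2 < M + 1), Nat.add_sub_cancel]
  simp only [hg]
  rw [show Nat.primesLE 1 = ∅ by decide, sum_empty, smul_zero, sub_zero, sub_eq_add_neg,
    ← sum_neg_distrib, smul_eq_mul, one_div_mul_eq_div]
  congr 1
  exact sum_congr rfl fun m _ => by rw [smul_eq_mul]; ring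

lemma abs_log_mul_sub_log_log_le {m : ℕ} (hm : 2 ≤ m) :
    |log m * (1 / log m - 1 / log (m + 1 : ℕ)) - (log (log (m + 1 : ℕ)) - log (log m))|
      ≤ 1 / (log 2 ^ 2 * m ^ 2) := by
  have hm2 : (2 : ℝ) ≤ m := by exact_mod_cast hm
  have hlog2 : 0 < log 2 := log_pos one_lt_two
  have hx : log 2 ≤ log m := log_le_log two_pos hm2
  have hxy : log m ≤ log (m + 1 : ℕ) := log_le_log (by linarith) (by push_cast; linarith)
  have hdiff : log (m + 1 : ℕ) - log m ≤ 1 / m := by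
    have := log_le_sub_one_of_pos (show (0 : ℝ) < (m + 1 : ℕ) / m by positivity)
    rw [log_div (by positivity) (by positivity)] at this
    push_cast at this ⊢
    rwa [add_div, div_self (by positivity), add_sub_cancel_left] at this
  have hy : log 2 ≤ log (m + 1 : ℕ) := hx.trans hxy
  have hfrac : log m * (1 / log m - 1 / log (m + 1 : ℕ)) =
      (log (m + 1 : ℕ) - log m) / log (m + 1 : ℕ) := by
    have := (hlog2.trans_le hx).ne'
    have := (hlog2.trans_le hy).ne'
    field_simp
  rw [hfrac, abs_sub_comm]
  have hD : 0 ≤ log (m + 1 : ℕ) - log m := by linarith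
  calc _ ≤ (log (m + 1 : ℕ) - log m) ^ 2 / (log m * log (m + 1 : ℕ)) :=
        abs_log_sub_log_sub_div_le (by linarith) hxy
    _ ≤ (1 / m) ^ 2 / (log 2 * log 2) := by
        gcongr
    _ = 1 / (log 2 ^ 2 * m ^ 2) := by ring

lemma abs_sum_log_mul_sub_log_log_le {M : ℕ} (hM : 2 ≤ M) :
    |∑ m ∈ Ico 2 M, log m * (1 / log m - 1 / log (m + 1 : ℕ)) - (log (log M) - log (log 2))|
      ≤ (∑' n : ℕ, 1 / (n : ℝ) ^ 2) / log 2 ^ 2 := by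
  rw [show log (log 2) = log (log ((2 : ℕ) : ℝ)) by norm_num,
    ← sum_Ico_sub (fun m : ℕ => log (log m)) hM, ← sum_sub_distrib]
  calc _ ≤ ∑ m ∈ Ico 2 M, 1 / (log 2 ^ 2 * (m : ℝ) ^ 2) :=
        (abs_sum_le_sum_abs _ _).trans
          (sum_le_sum fun m hm => abs_log_mul_sub_log_log_le (mem_Ico.1 hm).1)
    _ = (∑ m ∈ Ico 2 M, 1 / (m : ℝ) ^ 2) / log 2 ^ 2 := by
        rw [sum_div]
        exact sum_congr rfl fun m _ => by ring
    _ ≤ _ := by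
        gcongr
        exact (Real.summable_one_div_nat_pow.2 one_lt_two).sum_le_tsum _ fun n _ => by positivity

theorem exists_abs_sum_one_div_sub_log_log_le :
    ∃ C, ∀ M : ℕ, 2 ≤ M → |∑ p ∈ M.primesLE, (1 / p : ℝ) - log (log M)| ≤ C := by
  obtain ⟨C₁, hC₁⟩ := exists_abs_sum_log_div_sub_log_le
  have hC₁0 : 0 ≤ C₁ := (abs_nonneg _).trans (hC₁ 0)
  set c := ∑' n : ℕ, 1 / (n : ℝ) ^ 2
  have hlog2 : 0 < log 2 := log_pos one_lt_two
  refine ⟨2 * (C₁ / log 2) + 1 + |log (log 2)| + c / log 2 ^ 2, fun M hM => ?_⟩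
  set S : ℕ → ℝ := fun m => ∑ p ∈ m.primesLE, log p / p
  set F : ℕ → ℝ := fun m => 1 / log m
  have hlog_ge : ∀ m : ℕ, 2 ≤ m → log 2 ≤ log m := fun m hm =>
    log_le_log two_pos (by exact_mod_cast hm)
  have boundary : |S M / log M - 1| ≤ C₁ / log 2 := by
    have hM0 := hlog2.trans_le (hlog_ge M hM)
    rw [show S M / log M - 1 = (S M - log M) / log M by field_simp, abs_div, abs_of_pos hM0]
    exact div_le_div₀ hC₁0 (hC₁ M) hlog2 (hlog_ge M hM)
  have main := abs_sum_log_mul_sub_log_log_le hM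
  have remainder : |∑ m ∈ Ico 2 M, (S m - log m) * (F m - F (m + 1))| ≤ C₁ / log 2 := by
    have hF : ∀ m ∈ Ico 2 M, F (m + 1) ≤ F m := fun m hm => by
      have hm := (mem_Ico.1 hm).1
      have hm' : (2 : ℝ) ≤ m := by exact_mod_cast hm
      exact one_div_le_one_div_of_le (hlog2.trans_le (hlog_ge m hm))
        (log_le_log (by linarith) (by push_cast; linarith))
    refine (abs_sum_mul_sub_le hM hF fun m _ => hC₁ m).trans ?_
    have : 0 ≤ F M := one_div_nonneg.2 (Real.log_natCast_nonneg M)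
    calc C₁ * (F 2 - F M) ≤ C₁ * F 2 := by gcongr; linarith
      _ = C₁ / log 2 := by simp [F, div_eq_mul_inv]
  have split : ∑ m ∈ Ico 2 M, S m * (F m - F (m + 1)) = ∑ m ∈ Ico 2 M, log m * (F m - F (m + 1)) +
      ∑ m ∈ Ico 2 M, (S m - log m) * (F m - F (m + 1)) := by
    rw [← sum_add_distrib]
    exact sum_congr rfl fun m _ => by ring
  rw [sum_primesLE_one_div_eq hM]
  change |S M / log M + ∑ m ∈ Ico 2 M, S m * (F m - F (m + 1)) - log (log M)| ≤ _
  rw [split]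
  rw [abs_le] at boundary main remainder ⊢
  have := neg_abs_le (log (log 2))
  have := le_abs_self (log (log 2))
  constructor <;> linarith

lemma B_mul {m n : ℕ} (hm : m ≠ 0) (hn : n ≠ 0) : B (m * n) = B m + B n := by
  rw [B, (Nat.perm_primeFactorsList_mul hm hn).sum_eq, List.sum_append, B, B]

lemma sum_Icc_B_eq_B_factorial (N : ℕ) : ∑ n ∈ Icc 1 N, B n = B N ! := by
  induction N with
  | zero => simp [B]
  | succ N ih =>
    rw [sum_Icc_succ_top (by omega), ih, Nat.factorial_succ,
      B_mul N.succ_ne_zero N.factorial_ne_zero, add_comm]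

lemma B_eq_sum_factorization (n : ℕ) : B n = ∑ p ∈ n.primeFactors, n.factorization p * p := by
  rw [B, sum_list_count, Nat.toFinset_factors]
  simp [Nat.primeFactorsList_count_eq]

lemma sum_Icc_sum_primeFactors {M : Type*} [AddCommMonoid M] (N : ℕ) (f : ℕ → M) :
    ∑ n ∈ Icc 1 N, ∑ p ∈ n.primeFactors, f p = ∑ p ∈ N.primesLE, (N / p) • f p := by
  rw [sum_comm' (t' := N.primesLE) (s' := fun p => {n ∈ Ioc 0 N | p ∣ n})]
  · simp [Nat.Ioc_filter_dvd_card_eq_div]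
  · intro n p
    simp only [mem_Icc, Nat.mem_primeFactors, Nat.mem_primesLE, mem_filter, mem_Ioc]
    constructor
    · rintro ⟨⟨hn1, hnN⟩, hp, hpn, -⟩
      exact ⟨⟨⟨hn1, hnN⟩, hpn⟩, (Nat.le_of_dvd hn1 hpn).trans hnN, hp⟩
    · rintro ⟨⟨⟨hn1, hnN⟩, hpn⟩, -, hp⟩
      exact ⟨⟨hn1, hnN⟩, hp, hpn, hn1.ne'⟩

lemma sum_Icc_B_eq_sum_Icc_beta_add (N : ℕ) : ∑ n ∈ Icc 1 N, B n =
    ∑ n ∈ Icc 1 N, beta n + ∑ p ∈ N.sqrt.primesLE, (N / p)!.factorization p * p := by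
  rw [sum_Icc_B_eq_B_factorial, B_eq_sum_factorization, Nat.primeFactors_factorial]
  simp only [beta, sum_Icc_sum_primeFactors, smul_eq_mul]
  rw [sum_subset (Nat.primesLE_mono N.sqrt_le_self) (f := fun p => (N / p)!.factorization p * p),
    ← sum_add_distrib]
  · refine sum_congr rfl fun p hp => ?_
    rw [Nat.factorization_factorial_eq_div_add (Nat.mem_primesLE.1 hp).2, add_mul]
  · intro p hpN hp
    rw [Nat.factorization_factorial_div_eq_zero_of_lt_sq, zero_mul]
    refine Nat.sqrt_lt'.1 (lt_of_not_ge fun h => hp ?_)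
    exact Nat.mem_primesLE.2 ⟨h, (Nat.mem_primesLE.1 hpN).2⟩

lemma abs_mul_factorization_factorial_div_sub_le {p : ℕ} (hp : p.Prime) (N : ℕ) :
    |((N / p)!.factorization p * p : ℝ) - N / p| ≤ p + 1 + 2 * N / p ^ 2 := by
  have hp0 : (0 : ℝ) < p := by exact_mod_cast hp.pos
  have hv := abs_factorization_factorial_sub_div_le hp (N / p)
  have hdiv : |((N / p : ℕ) : ℝ) - N / p| ≤ 1 := by
    rw [abs_le]
    constructor <;>
      linarith [Nat.cast_div_sub_one_le N p, Nat.cast_div_le (α := ℝ) (m := N) (n := p)]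
  have hscaled : |((N / p)!.factorization p * p : ℝ) - (N / p : ℕ)| ≤ p + 2 * N / p ^ 2 := by
    calc _ = |((N / p)!.factorization p : ℝ) - (N / p : ℕ) / p| * p := by
          rw [← abs_of_pos hp0, ← abs_mul, abs_of_pos hp0]
          congr 1
          field_simp
      _ ≤ (1 + 2 * (N / p : ℕ) / p ^ 2) * p := by gcongr
      _ = p + 2 * (N / p : ℕ) / p := by field_simp
      _ ≤ p + 2 * (N / p) / p := by gcongr; exact Nat.cast_div_le
      _ = p + 2 * N / p ^ 2 := by field_simp
  calc _ ≤ |((N / p)!.factorization p * p : ℝ) - (N / p : ℕ)| + |((N / p : ℕ) : ℝ) - N / p| :=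
        abs_sub_le _ _ _
    _ ≤ _ := by linarith

lemma sum_primesLE_sqrt_add_one_le (N : ℕ) : ∑ p ∈ N.sqrt.primesLE, ((p : ℝ) + 1) ≤ 4 * N := by
  set s := N.sqrt
  have hs : (s : ℝ) ^ 2 ≤ N := by exact_mod_cast N.sqrt_le'
  calc _ ≤ #s.primesLE • (2 * s : ℝ) := sum_le_card_nsmul _ _ _ fun p hp => by
        obtain ⟨hps, hp⟩ := Nat.mem_primesLE.1 hp
        have : (2 : ℝ) ≤ p := by exact_mod_cast hp.two_le
        have : (p : ℝ) ≤ s := by exact_mod_cast hps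
        linarith
    _ ≤ (s + 1) * (2 * s : ℝ) := by
        rw [nsmul_eq_mul]
        gcongr
        exact_mod_cast (card_filter_le _ _).trans (card_range _).le
    _ ≤ 4 * N := by
        have : (s : ℝ) ≤ s ^ 2 := by
          rcases s.eq_zero_or_pos with h | h
          · simp [h]
          · exact le_self_pow₀ (by exact_mod_cast h) two_ne_zero
        nlinarith

lemma exists_abs_sum_B_sub_beta_sub_mul_sum_one_div_le : ∃ C, ∀ N : ℕ,
    |∑ n ∈ Icc 1 N, ((B n : ℝ) - beta n) - N * ∑ p ∈ N.sqrt.primesLE, (1 / p : ℝ)| ≤ C * N := by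
  set c := ∑' n : ℕ, 1 / (n : ℝ) ^ 2
  refine ⟨4 + 2 * c, fun N => ?_⟩
  have htail : ∑ p ∈ N.sqrt.primesLE, (1 / p ^ 2 : ℝ) ≤ c :=
    (Real.summable_one_div_nat_pow.2 one_lt_two).sum_le_tsum _ fun n _ => by positivity
  have hsum : ∑ n ∈ Icc 1 N, ((B n : ℝ) - beta n) =
      ∑ p ∈ N.sqrt.primesLE, ((N / p)!.factorization p * p : ℝ) := by
    rw [sum_sub_distrib, sub_eq_iff_eq_add']
    exact_mod_cast sum_Icc_B_eq_sum_Icc_beta_add N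
  rw [hsum, mul_sum, ← sum_sub_distrib]
  calc _ ≤ ∑ p ∈ N.sqrt.primesLE, (((p : ℝ) + 1) + 2 * N * (1 / p ^ 2)) :=
        (abs_sum_le_sum_abs _ _).trans (sum_le_sum fun p hp => by
          have := abs_mul_factorization_factorial_div_sub_le (Nat.mem_primesLE.1 hp).2 N
          rw [mul_one_div]
          exact this.trans_eq (by ring))
    _ ≤ 4 * N + 2 * N * c := by
        rw [sum_add_distrib, ← mul_sum]
        gcongr
        exact sum_primesLE_sqrt_add_one_le N
    _ = (4 + 2 * c) * N := by ring

lemma abs_floor_mul_log_log_sqrt_floor_sub_le {x : ℝ} (hx : 4 ≤ x) :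
    |⌊x⌋₊ * log (log ⌊x⌋₊.sqrt) - x * log (log x)| ≤ (1 + log 4) * x := by
  set N := ⌊x⌋₊
  set s := N.sqrt
  have hNx : (N : ℝ) ≤ x := Nat.floor_le (by linarith)
  have hxN : x < N + 1 := Nat.lt_floor_add_one x
  have hs2 : (2 : ℝ) ≤ s := by exact_mod_cast Nat.le_sqrt'.2 (Nat.le_floor (by norm_num; linarith))
  have hsx : (s : ℝ) ≤ x := hNx.trans' (by exact_mod_cast N.sqrt_le_self)
  have hxs : x ≤ (s : ℝ) ^ 4 := by
    have h1 : (N : ℝ) + 1 ≤ (s + 1) ^ 2 := by exact_mod_cast N.lt_succ_sqrt'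
    have h2 : (s : ℝ) + 1 ≤ s ^ 2 := by nlinarith
    have h3 : ((s : ℝ) + 1) ^ 2 ≤ (s ^ 2) ^ 2 := pow_le_pow_left₀ (by positivity) h2 2
    linarith [pow_mul (s : ℝ) 2 2]
  have hloglog : log (log s) ≤ log (log x) ∧ log (log x) ≤ log (log s) + log 4 := by
    refine ⟨log_le_log (log_pos (by linarith)) (log_le_log (by linarith) hsx), ?_⟩
    exact_mod_cast log_log_le_log_log_add_log (by linarith) hsx hxs
  have hlogx : 1 ≤ log x := by
    rw [le_log_iff_exp_le (by linarith)]
    linarith [exp_one_lt_d9]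
  have hloglog_x : |log (log x)| ≤ x := by
    rw [abs_of_nonneg (log_nonneg hlogx)]
    exact (log_le_self (by linarith)).trans (log_le_self (by linarith))
  have hN0 : (0 : ℝ) ≤ N := N.cast_nonneg
  rw [show N * log (log s) - x * log (log x) =
    (N - x) * log (log x) - N * (log (log x) - log (log s)) by ring]
  have h1 : |((N : ℝ) - x) * log (log x)| ≤ 1 * x := by
    rw [abs_mul]
    gcongr
    exact abs_le.2 ⟨by linarith, by linarith⟩
  have h2 : |(N : ℝ) * (log (log x) - log (log s))| ≤ x * log 4 := by
    rw [abs_mul, abs_of_nonneg hN0, abs_of_nonneg (sub_nonneg.2 hloglog.1)]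
    exact mul_le_mul hNx (by linarith [hloglog.2]) (sub_nonneg.2 hloglog.1) (by linarith)
  linarith [abs_sub ((N - x) * log (log x)) (N * (log (log x) - log (log s)))]

lemma exists_abs_sum_B_sub_beta_sub_le : ∃ C, ∀ x : ℝ, 4 ≤ x →
    |∑ n ∈ Icc 1 ⌊x⌋₊, ((B n : ℝ) - beta n) - x * log (log x)| ≤ C * x := by
  obtain ⟨C₁, hC₁⟩ := exists_abs_sum_B_sub_beta_sub_mul_sum_one_div_le
  obtain ⟨C₂, hC₂⟩ := exists_abs_sum_one_div_sub_log_log_le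
  refine ⟨C₁ + C₂ + 1 + log 4, fun x hx => ?_⟩
  set N := ⌊x⌋₊
  have hNx : (N : ℝ) ≤ x := Nat.floor_le (by linarith)
  have hN0 : (0 : ℝ) ≤ N := N.cast_nonneg
  have hC₁0 : 0 ≤ C₁ := by simpa using (abs_nonneg _).trans (hC₁ 1)
  have hC₂0 : 0 ≤ C₂ := (abs_nonneg _).trans (hC₂ 2 le_rfl)
  have mertens : |N * ∑ p ∈ N.sqrt.primesLE, (1 / p : ℝ) - N * log (log N.sqrt)| ≤ C₂ * N := by
    rw [← mul_sub, abs_mul, abs_of_nonneg hN0, mul_comm]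
    refine mul_le_mul_of_nonneg_right (hC₂ _ ?_) hN0
    exact Nat.le_sqrt'.2 (Nat.le_floor (by norm_num; linarith))
  calc _ ≤ C₁ * N + C₂ * N + (1 + log 4) * x := by
        have := abs_sub_le (∑ n ∈ Icc 1 N, ((B n : ℝ) - beta n))
          (N * ∑ p ∈ N.sqrt.primesLE, (1 / p : ℝ)) (x * log (log x))
        have := abs_sub_le (N * ∑ p ∈ N.sqrt.primesLE, (1 / p : ℝ)) (N * log (log N.sqrt))
          (x * log (log x))
        linarith [hC₁ N, abs_floor_mul_log_log_sqrt_floor_sub_le hx]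
    _ ≤ C₁ * x + C₂ * x + (1 + log 4) * x := by gcongr
    _ = (C₁ + C₂ + 1 + log 4) * x := by ring

lemma Ba_sub_betaa (a n : ℕ) : (Ba a n : ℝ) - betaa a n = B n - beta n := by
  by_cases hp : n.Prime
  · simp [Ba, betaa, hp, B, beta, Nat.primeFactorsList_prime hp]
  · simp [Ba, betaa, hp]

theorem summatory_Ba_sub_betaa_general (a : ℕ) :
    (fun x : ℝ =>
        (∑ n ∈ Finset.Icc 1 ⌊x⌋₊, ((Ba a n : ℝ) - (betaa a n : ℝ))) -
          x * Real.log (Real.log x)) =O[atTop] (fun x : ℝ => x) := by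
  obtain ⟨C, hC⟩ := exists_abs_sum_B_sub_beta_sub_le
  refine isBigO_iff.2 ⟨C, ?_⟩
  filter_upwards [eventually_ge_atTop 4] with x hx
  simp only [Ba_sub_betaa, norm_eq_abs, abs_of_nonneg (by linarith : (0 : ℝ) ≤ x)]
  exact hC x hx

/-- The average order of `B_a(n) - β_a(n)` is `log log n`:
`∑_{n ≤ x} (B_a(n) - β_a(n)) = x log log x + O(x)` as `x → ∞`. -/
theorem summatory_Ba_sub_betaa (a : ℕ) (ha : 0 < a) :
    (fun x : ℝ =>
        (∑ n ∈ Finset.Icc 1 ⌊x⌋₊, ((Ba a n : ℝ) - (betaa a n : ℝ))) -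
          x * Real.log (Real.log x)) =O[atTop] (fun x : ℝ => x) :=
  summatory_Ba_sub_betaa_general a
end

section
/- For every prime p > 6, one has B_1(B_1(p)) < p; consequently, the stopping time of the map B_1 at a prime p > 6 is 2. -/
theorem List.sum_le_prod_of_two_le {l : List ℕ} (h : ∀ x ∈ l, 2 ≤ x) : l.sum ≤ l.prod := by
  induction l with
  | nil => simp
  | cons a t ih =>
    have ha : 2 ≤ a := h a List.mem_cons_self
    have ht : ∀ x ∈ t, 2 ≤ x := fun x hx => h x (List.mem_cons_of_mem a hx)
    rw [List.sum_cons, List.prod_cons]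
    rcases t with _ | ⟨b, t'⟩
    · simp
    · have hprod : 2 ≤ (b :: t').prod :=
        (ht b List.mem_cons_self).trans
          (List.single_le_prod (fun x hx => one_le_two.trans (ht x hx)) b List.mem_cons_self)
      nlinarith [ih ht]

theorem B_le_self (n : ℕ) : B n ≤ n := by
  rcases Nat.eq_zero_or_pos n with rfl | hn
  · simp [B]
  calc B n ≤ n.primeFactorsList.prod :=
        List.sum_le_prod_of_two_le fun _ hx => (Nat.prime_of_mem_primeFactorsList hx).two_le
    _ = n := Nat.prod_primeFactorsList hn.ne'

theorem B_two_mul {m : ℕ} (hm : m ≠ 0) : B (2 * m) = 2 + B m := by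
  simp [B, (Nat.perm_primeFactorsList_mul two_ne_zero hm).sum_eq,
    Nat.primeFactorsList_prime Nat.prime_two]

theorem B_two_mul_le (m : ℕ) : B (2 * m) ≤ m + 2 := by
  rcases eq_or_ne m 0 with rfl | hm
  · simp [B]
  rw [B_two_mul hm]
  linarith [B_le_self m]

/-- For every prime `p > 6`, `B₁(B₁(p)) < p` while `p < B₁(p)`;
consequently the stopping time of `B₁` at `p` is `2`. -/
theorem B1_stopping_time_two (p : ℕ) (hp : p.Prime) (hp6 : 6 < p) :
    Ba 1 (Ba 1 p) < p ∧ p < Ba 1 p := by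
  have hBa : Ba 1 p = p + 1 := if_pos hp
  have heven : Even (p + 1) := (hp.odd_of_ne_two (by omega)).add_one
  have hcomposite : ¬ (p + 1).Prime := fun h => by
    have := (h.even_iff).mp heven
    omega
  obtain ⟨m, hm⟩ := heven
  have hBB : Ba 1 (p + 1) = B (2 * m) := by rw [Ba, if_neg hcomposite, hm, two_mul]
  rw [hBa, hBB]
  have := B_two_mul_le m
  omega
end
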